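/- For 2 ≤ n ≤ 9, the hyperbolic n-space ℍⁿ(-1) admits no minimal isometric immersion into a unit ball B(0,1) ⊂ ℝ^N for any N. -/

import Mathlib

open MeasureTheory

/-- The height (last coordinate) `x_n` of a point of `ℝⁿ`, used for the upper
half-space model of hyperbolic space. -/
noncomputable def height (n : ℕ) (x : EuclideanSpace ℝ (Fin n)) : ℝ :=
  if h : 0 < n then x ⟨n - 1, by omega⟩ else 0

/-- The upper half-space `{x ∈ ℝⁿ : x_n > 0}`, the underlying set of the
half-space model of hyperbolic `n`-space `ℍⁿ(-1)` with metric `g = x_n⁻² δ`. -/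
def upperHalfSpace (n : ℕ) : Set (EuclideanSpace ℝ (Fin n)) :=
  {x | 0 < height n x}

/-- The fundamental tone `λ*(ℍⁿ(-1))` of hyperbolic `n`-space, computed in the
upper half-space model: the infimum of the Rayleigh quotients
`∫ |∇u|²_g dvol_g / ∫ u² dvol_g` over smooth nonzero compactly supported functions
`u` with support in the half-space, where `|∇u|²_g = x_n² |∇u|²` and
`dvol_g = x_n⁻ⁿ dx`. -/
noncomputable def hyperbolicFundamentalTone (n : ℕ) : ℝ :=
  sInf {r | ∃ u : EuclideanSpace ℝ (Fin n) → ℝ,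
    ContDiff ℝ (⊤ : ℕ∞) u ∧ HasCompactSupport u ∧ tsupport u ⊆ upperHalfSpace n ∧ u ≠ 0 ∧
    r = (∫ x in upperHalfSpace n,
          (height n x) ^ 2 * ‖gradient u x‖ ^ 2 * (height n x) ^ (-(n : ℝ))) /
        (∫ x in upperHalfSpace n, (u x) ^ 2 * (height n x) ^ (-(n : ℝ)))}

/-- The vertical unit vector `e_n` in `ℝⁿ`. -/
noncomputable def vertDir (n : ℕ) : EuclideanSpace ℝ (Fin n) :=
  if h : 0 < n then EuclideanSpace.single ⟨n - 1, by omega⟩ 1 else 0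

/-- The Euclidean Laplacian `Δu = Σᵢ ∂²u/∂xᵢ²` of `u : ℝⁿ → ℝ`. -/
noncomputable def euclLaplacian (n : ℕ) (u : EuclideanSpace ℝ (Fin n) → ℝ)
    (x : EuclideanSpace ℝ (Fin n)) : ℝ :=
  ∑ i : Fin n, fderiv ℝ (fun y => fderiv ℝ u y (EuclideanSpace.single i 1)) x
    (EuclideanSpace.single i 1)

/-- The Laplace–Beltrami operator of hyperbolic `n`-space in the half-space model:
`Δ_g u = x_n² Δu + (2 - n) x_n ∂u/∂x_n`. -/
noncomputable def hypLaplacian (n : ℕ) (u : EuclideanSpace ℝ (Fin n) → ℝ)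
    (x : EuclideanSpace ℝ (Fin n)) : ℝ :=
  (height n x) ^ 2 * euclLaplacian n u x +
    (2 - (n : ℝ)) * height n x * fderiv ℝ u x (vertDir n)

open Filter Set


open Filter Set

lemma secondDeriv_nonneg_of_isLocalMin {h : ℝ → ℝ} {s : Set ℝ} (hs : IsOpen s)
    (h0 : (0:ℝ) ∈ s) (hcd : ContDiffOn ℝ 2 h s) (hloc : IsLocalMin h 0) :
    0 ≤ deriv (deriv h) 0 := by
  by_contra hlt
  push_neg at hlt
  set g := deriv h with hg_def
  have hg : ContDiffOn ℝ 1 g s := hcd.deriv_of_isOpen hs (by norm_num)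
  have hgd : DifferentiableAt ℝ g 0 :=
    (hg.contDiffAt (hs.mem_nhds h0)).differentiableAt one_ne_zero
  have hg0 : g 0 = 0 := hloc.deriv_eq_zero
  have hga : HasDerivAt g (deriv g 0) 0 := hgd.hasDerivAt
  have hslope : Tendsto (slope g 0) (nhdsWithin 0 {(0:ℝ)}ᶜ) (nhds (deriv g 0)) :=
    hasDerivAt_iff_tendsto_slope.1 hga
  have hev : ∀ᶠ y in nhdsWithin 0 {(0:ℝ)}ᶜ, slope g 0 y < 0 :=
    hslope.eventually_lt_const hlt
  have hev1 : ∀ᶠ y in nhdsWithin (0:ℝ) (Set.Ioi 0), slope g 0 y < 0 :=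
    hev.filter_mono (nhdsWithin_mono _ (fun x hx => by
      simp only [Set.mem_compl_iff, Set.mem_singleton_iff]
      exact ne_of_gt hx))
  have hev2 : ∀ᶠ y in nhdsWithin (0:ℝ) (Set.Ioi 0), y ∈ s :=
    eventually_nhdsWithin_of_eventually_nhds (hs.eventually_mem h0)
  have hev3 : ∀ᶠ y in nhdsWithin (0:ℝ) (Set.Ioi 0), h 0 ≤ h y :=
    eventually_nhdsWithin_of_eventually_nhds hloc
  obtain ⟨δ, hδpos, hδ⟩ := (nhdsGT_basis (0:ℝ)).eventually_iff.1
    ((hev1.and hev2).and hev3)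
  -- h is strictly decreasing on [0, δ/2]
  have hIcc : Icc (0:ℝ) (δ/2) ⊆ s := by
    intro y hy
    rcases eq_or_lt_of_le hy.1 with h' | h'
    · simpa [← h'] using h0
    · exact (hδ ⟨h', lt_of_le_of_lt hy.2 (by linarith)⟩).1.2
  have hanti : StrictAntiOn h (Icc (0:ℝ) (δ/2)) := by
    apply strictAntiOn_of_deriv_neg (convex_Icc _ _)
      ((hcd.continuousOn).mono hIcc)
    intro y hy
    rw [interior_Icc] at hy
    have hyIoo : y ∈ Set.Ioo (0:ℝ) δ := ⟨hy.1, lt_trans hy.2 (by linarith)⟩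
    have hsl := (hδ hyIoo).1.1
    rw [slope_def_field] at hsl
    have : g y / y < 0 := by simpa [hg0] using hsl
    have hgy : g y < 0 := by
      rcases div_neg_iff.1 this with ⟨_, h2⟩ | ⟨h1, _⟩
      · linarith [hy.1]
      · exact h1
    exact hgy
  have hmem : (δ/2 : ℝ) ∈ Set.Ioo (0:ℝ) δ := ⟨by linarith, by linarith⟩
  have hle := (hδ hmem).2
  have hltm := hanti (Set.left_mem_Icc.2 (by linarith)) ⟨le_of_lt hmem.1, le_rfl⟩ hmem.1
  linarith


open Filter Set

variable {E : Type*} [NormedAddCommGroup E] [NormedSpace ℝ E]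

lemma line_hasDerivAt {f : E → ℝ} {x : E} (e : E) {r : ℝ}
    (hf : DifferentiableAt ℝ f (x + r • e)) :
    HasDerivAt (fun r : ℝ => f (x + r • e)) (fderiv ℝ f (x + r • e) e) r := by
  have hl : HasDerivAt (fun r : ℝ => x + r • e) e r := by
    simpa using ((hasDerivAt_id r).smul_const e).const_add x
  have hfd : HasFDerivAt f (fderiv ℝ f (x + r • e)) ((fun r : ℝ => x + r • e) r) :=
    hf.hasFDerivAt
  simpa [Function.comp_def] using hfd.comp_hasDerivAt r hl

lemma line_deriv_eq {f : E → ℝ} {s : Set E} (hs : IsOpen s) {x : E} (hx : x ∈ s)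
    (hf : ContDiffOn ℝ 2 f s) (e : E) :
    deriv (fun r : ℝ => f (x + r • e)) 0 = fderiv ℝ f x e := by
  have hx0 : x + (0:ℝ) • e = x := by simp
  have hdf : DifferentiableAt ℝ f (x + (0:ℝ) • e) := by
    rw [hx0]
    exact (hf.differentiableOn (by norm_num)).differentiableAt (hs.mem_nhds hx)
  have := (line_hasDerivAt e hdf).deriv
  rwa [hx0] at this

lemma line_second_deriv_eq {f : E → ℝ} {s : Set E} (hs : IsOpen s) {x : E} (hx : x ∈ s)
    (hf : ContDiffOn ℝ 2 f s) (e : E) :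
    deriv (deriv (fun r : ℝ => f (x + r • e))) 0
      = fderiv ℝ (fun y => fderiv ℝ f y e) x e := by
  have hlcont : Continuous (fun r : ℝ => x + r • e) := by continuity
  have hT : IsOpen ((fun r : ℝ => x + r • e) ⁻¹' s) := hs.preimage hlcont
  have h0T : (0:ℝ) ∈ (fun r : ℝ => x + r • e) ⁻¹' s := by simp [hx]
  have hev : deriv (fun r : ℝ => f (x + r • e)) =ᶠ[nhds 0]
      fun r => fderiv ℝ f (x + r • e) e := by
    filter_upwards [hT.mem_nhds h0T] with r hr
    have hdf : DifferentiableAt ℝ f (x + r • e) :=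
      (hf.differentiableOn (by norm_num)).differentiableAt (hs.mem_nhds hr)
    exact (line_hasDerivAt e hdf).deriv
  rw [hev.deriv_eq]
  have hg : DifferentiableAt ℝ (fun y => fderiv ℝ f y e) x := by
    have h1 : ContDiffAt ℝ 1 (fderiv ℝ f) x :=
      (hf.contDiffAt (hs.mem_nhds hx)).fderiv_right (by norm_num)
    have h2 : DifferentiableAt ℝ (fderiv ℝ f) x := h1.differentiableAt one_ne_zero
    exact ((ContinuousLinearMap.apply ℝ ℝ e).differentiableAt).comp x h2
  have hl0 : HasDerivAt (fun r : ℝ => x + r • e) e 0 := by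
    simpa using ((hasDerivAt_id (0:ℝ)).smul_const e).const_add x
  have hgd : HasFDerivAt (fun y => fderiv ℝ f y e)
      (fderiv ℝ (fun y => fderiv ℝ f y e) x) ((fun r : ℝ => x + r • e) 0) := by
    simpa using hg.hasFDerivAt
  have := hgd.comp_hasDerivAt 0 hl0
  simpa [Function.comp_def] using this.deriv


open Filter Set

private lemma num_hasDeriv (a b : ℝ) (r : ℝ) :
    HasDerivAt (fun r : ℝ => a + b * r + r ^ 2) (b + 2 * r) r := by
  have h1 : HasDerivAt (fun x : ℝ => b * x) b r := by
    simpa using (hasDerivAt_id r).const_mul b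
  have h2 : HasDerivAt (fun x : ℝ => x ^ 2) (2 * r) r := by
    simpa using hasDerivAt_pow 2 r
  have h := ((hasDerivAt_const r a).fun_add h1).fun_add h2
  exact h.congr_deriv (by ring)

private lemma den_hasDeriv (t δ : ℝ) (r : ℝ) :
    HasDerivAt (fun r : ℝ => 2 * (t + r * δ)) (2 * δ) r := by
  have h1 : HasDerivAt (fun x : ℝ => x * δ) δ r := by
    simpa using (hasDerivAt_id r).mul_const δ
  exact (h1.const_add t).const_mul 2

lemma rat_hasDerivAt (a b t δ : ℝ) (r : ℝ) (hr : 0 < t + r * δ) :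
    HasDerivAt (fun r : ℝ => (a + b * r + r ^ 2) / (2 * (t + r * δ)))
      (((b + 2 * r) * (2 * (t + r * δ)) - (a + b * r + r ^ 2) * (2 * δ))
        / (2 * (t + r * δ)) ^ 2) r :=
  (num_hasDeriv a b r).div (den_hasDeriv t δ r) (by positivity)

lemma rat_deriv0 (a b t δ : ℝ) (ht : 0 < t) :
    deriv (fun r : ℝ => (a + b * r + r ^ 2) / (2 * (t + r * δ))) 0
      = (b * t - a * δ) / (2 * t ^ 2) := by
  have h := (rat_hasDerivAt a b t δ 0 (by simpa using ht)).deriv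
  rw [h]
  have ht' : t ≠ 0 := ne_of_gt ht
  rw [div_eq_div_iff (by simp [ht']) (by simp [ht'])]
  ring

lemma rat_deriv2 (a b t δ : ℝ) (ht : 0 < t) :
    deriv (deriv (fun r : ℝ => (a + b * r + r ^ 2) / (2 * (t + r * δ)))) 0
      = (t ^ 2 - b * t * δ + a * δ ^ 2) / t ^ 3 := by
  have hTopen : IsOpen {r : ℝ | 0 < t + r * δ} := by
    have : Continuous (fun r : ℝ => t + r * δ) := by continuity
    exact isOpen_lt continuous_const this
  have h0T : (0:ℝ) ∈ {r : ℝ | 0 < t + r * δ} := by simpa using ht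
  have hev : deriv (fun r : ℝ => (a + b * r + r ^ 2) / (2 * (t + r * δ)))
      =ᶠ[nhds 0] fun r =>
        ((b + 2 * r) * (2 * (t + r * δ)) - (a + b * r + r ^ 2) * (2 * δ))
          / (2 * (t + r * δ)) ^ 2 := by
    filter_upwards [hTopen.mem_nhds h0T] with r hr
    exact (rat_hasDerivAt a b t δ r hr).deriv
  rw [hev.deriv_eq]
  -- differentiate the quotient once more at 0
  have hP : HasDerivAt (fun r : ℝ =>
      (b + 2 * r) * (2 * (t + r * δ)) - (a + b * r + r ^ 2) * (2 * δ))
      (2 * (2 * (t + 0 * δ)) + (b + 2 * 0) * (2 * δ) - (b + 2 * 0) * (2 * δ)) 0 := by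
    have h1 : HasDerivAt (fun r : ℝ => b + 2 * r) 2 0 := by
      simpa using ((hasDerivAt_id (0:ℝ)).const_mul 2).const_add b
    exact (h1.mul (den_hasDeriv t δ 0)).sub ((num_hasDeriv a b 0).mul_const (2 * δ))
  have hQ : HasDerivAt (fun r : ℝ => (2 * (t + r * δ)) ^ 2)
      ((2:ℕ) * (2 * (t + 0 * δ)) ^ (2 - 1) * (2 * δ)) 0 :=
    (den_hasDeriv t δ 0).pow 2
  have hQ0 : (2 * (t + 0 * δ)) ^ 2 ≠ 0 := by
    simpa using (by positivity : (2 * t) ^ 2 ≠ 0)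
  have h := (hP.fun_div hQ hQ0).deriv
  rw [h]
  have ht' : t ≠ 0 := ne_of_gt ht
  rw [div_eq_div_iff (by simp [ht']) (by simp [ht'])]
  ring

lemma comb_deriv0 {p q : ℝ → ℝ} {T : Set ℝ} (hT : IsOpen T) (h0 : (0:ℝ) ∈ T)
    (hp : ContDiffOn ℝ 2 p T) (hq : ContDiffOn ℝ 2 q T) :
    deriv (fun r => p r - 2 * q r) 0 = deriv p 0 - 2 * deriv q 0 := by
  have hpd : DifferentiableAt ℝ p 0 :=
    (hp.differentiableOn (by norm_num)).differentiableAt (hT.mem_nhds h0)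
  have hqd : DifferentiableAt ℝ q 0 :=
    (hq.differentiableOn (by norm_num)).differentiableAt (hT.mem_nhds h0)
  rw [deriv_fun_sub hpd (hqd.const_mul 2), deriv_const_mul 2 hqd]

lemma comb_deriv2 {p q : ℝ → ℝ} {T : Set ℝ} (hT : IsOpen T) (h0 : (0:ℝ) ∈ T)
    (hp : ContDiffOn ℝ 2 p T) (hq : ContDiffOn ℝ 2 q T) :
    deriv (deriv (fun r => p r - 2 * q r)) 0
      = deriv (deriv p) 0 - 2 * deriv (deriv q) 0 := by
  have hev : deriv (fun r => p r - 2 * q r) =ᶠ[nhds 0]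
      fun r => deriv p r - 2 * deriv q r := by
    filter_upwards [hT.mem_nhds h0] with r hr
    have hpd : DifferentiableAt ℝ p r :=
      (hp.differentiableOn (by norm_num)).differentiableAt (hT.mem_nhds hr)
    have hqd : DifferentiableAt ℝ q r :=
      (hq.differentiableOn (by norm_num)).differentiableAt (hT.mem_nhds hr)
    rw [deriv_fun_sub hpd (hqd.const_mul 2), deriv_const_mul 2 hqd]
  rw [hev.deriv_eq]
  have hpd' : DifferentiableAt ℝ (deriv p) 0 :=
    ((hp.deriv_of_isOpen hT (by norm_num)).contDiffAt
      (hT.mem_nhds h0)).differentiableAt one_ne_zero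
  have hqd' : DifferentiableAt ℝ (deriv q) 0 :=
    ((hq.deriv_of_isOpen hT (by norm_num)).contDiffAt
      (hT.mem_nhds h0)).differentiableAt one_ne_zero
  rw [deriv_fun_sub hpd' (hqd'.const_mul 2), deriv_const_mul 2 hqd']


open Filter Set

lemma sumsq_hasDerivAt {N : ℕ} {ψ : Fin N → ℝ → ℝ} {T : Set ℝ} (hT : IsOpen T)
    (hψ : ∀ j, ContDiffOn ℝ 2 (ψ j) T) {r : ℝ} (hr : r ∈ T) :
    HasDerivAt (fun r => ∑ j : Fin N, ψ j r ^ 2)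
      (∑ j : Fin N, 2 * ψ j r * deriv (ψ j) r) r := by
  apply HasDerivAt.fun_sum
  intro j _
  have hd : DifferentiableAt ℝ (ψ j) r :=
    ((hψ j).differentiableOn (by norm_num)).differentiableAt (hT.mem_nhds hr)
  have := hd.hasDerivAt.fun_pow 2
  exact this.congr_deriv (by ring)

lemma sumsq_deriv0 {N : ℕ} {ψ : Fin N → ℝ → ℝ} {T : Set ℝ} (hT : IsOpen T)
    (h0 : (0:ℝ) ∈ T) (hψ : ∀ j, ContDiffOn ℝ 2 (ψ j) T) :
    deriv (fun r => ∑ j : Fin N, ψ j r ^ 2) 0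
      = ∑ j : Fin N, 2 * ψ j 0 * deriv (ψ j) 0 :=
  (sumsq_hasDerivAt hT hψ h0).deriv

lemma sumsq_deriv2 {N : ℕ} {ψ : Fin N → ℝ → ℝ} {T : Set ℝ} (hT : IsOpen T)
    (h0 : (0:ℝ) ∈ T) (hψ : ∀ j, ContDiffOn ℝ 2 (ψ j) T) :
    deriv (deriv (fun r => ∑ j : Fin N, ψ j r ^ 2)) 0
      = ∑ j : Fin N, (2 * (deriv (ψ j) 0) ^ 2 + 2 * ψ j 0 * deriv (deriv (ψ j)) 0) := by
  have hev : deriv (fun r => ∑ j : Fin N, ψ j r ^ 2) =ᶠ[nhds 0]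
      fun r => ∑ j : Fin N, 2 * ψ j r * deriv (ψ j) r := by
    filter_upwards [hT.mem_nhds h0] with r hr
    exact (sumsq_hasDerivAt hT hψ hr).deriv
  rw [hev.deriv_eq]
  have h : HasDerivAt (fun r => ∑ j : Fin N, 2 * ψ j r * deriv (ψ j) r)
      (∑ j : Fin N, (2 * (deriv (ψ j) 0) ^ 2 + 2 * ψ j 0 * deriv (deriv (ψ j)) 0)) 0 := by
    apply HasDerivAt.fun_sum
    intro j _
    have hd : DifferentiableAt ℝ (ψ j) 0 :=
      ((hψ j).differentiableOn (by norm_num)).differentiableAt (hT.mem_nhds h0)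
    have hd' : DifferentiableAt ℝ (deriv (ψ j)) 0 :=
      (((hψ j).deriv_of_isOpen hT (by norm_num)).contDiffAt
        (hT.mem_nhds h0)).differentiableAt one_ne_zero
    have := (hd.hasDerivAt.const_mul 2).fun_mul hd'.hasDerivAt
    exact this.congr_deriv (by ring)
  exact h.deriv

lemma euclid_norm_sq {m : ℕ} (x : EuclideanSpace ℝ (Fin m)) :
    ‖x‖ ^ 2 = ∑ j, (x j) ^ 2 := by
  rw [EuclideanSpace.norm_eq, Real.sq_sqrt (Finset.sum_nonneg fun i _ => by positivity)]
  simp [Real.norm_eq_abs, sq_abs]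


section Main


set_option maxHeartbeats 1000000 in
/-- For `2 ≤ n ≤ 9`, hyperbolic `n`-space `ℍⁿ(-1)` admits no minimal isometric
immersion into the unit ball `B(0,1) ⊂ ℝᴺ`, for any `N`.  Here `ℍⁿ(-1)` is the
upper half-space with metric `x_n⁻² δ`; a map `φ` is an isometric immersion iff
`‖dφ(v)‖² = ‖v‖²/x_n²` (the hyperbolic metric), `φ` is smooth on the half-space, and
it is minimal iff its tension field vanishes, i.e. each component of `φ` is
harmonic for the hyperbolic Laplacian (`Δ_g φ = H = 0`). -/
theorem no_minimal_immersion_of_hyperbolic_space (n N : ℕ)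
    (hn : 2 ≤ n) (hn' : n ≤ 9) :
    ¬ ∃ φ : EuclideanSpace ℝ (Fin n) → EuclideanSpace ℝ (Fin N),
      ContDiffOn ℝ (⊤ : ℕ∞) φ (upperHalfSpace n) ∧
      (∀ x ∈ upperHalfSpace n, ∀ v : EuclideanSpace ℝ (Fin n),
        ‖fderiv ℝ φ x v‖ ^ 2 = ‖v‖ ^ 2 / (height n x) ^ 2) ∧
      (∀ x ∈ upperHalfSpace n, ∀ j : Fin N,
        hypLaplacian n (fun y => φ y j) x = 0) ∧
      (∀ x ∈ upperHalfSpace n, ‖φ x‖ < 1) := by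
  rintro ⟨φ, hsm, hiso, hmino, hbd⟩
  have hnpos : 0 < n := by omega
  set i_n : Fin n := ⟨n - 1, by omega⟩ with hi_n
  have hheight : ∀ x : EuclideanSpace ℝ (Fin n), height n x = x i_n :=
    fun x => dif_pos hnpos
  have hvert : vertDir n = EuclideanSpace.single i_n 1 := dif_pos hnpos
  have hUmem : ∀ x : EuclideanSpace ℝ (Fin n), x ∈ upperHalfSpace n ↔ 0 < x i_n := by
    intro x
    unfold upperHalfSpace
    rw [Set.mem_setOf_eq, hheight]
  have hUopen : IsOpen (upperHalfSpace n) := by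
    have h : upperHalfSpace n
        = (fun x : EuclideanSpace ℝ (Fin n) => x i_n) ⁻¹' (Set.Ioi 0) := by
      ext x; simpa using hUmem x
    rw [h]
    exact isOpen_Ioi.preimage (EuclideanSpace.proj (𝕜 := ℝ) i_n).continuous
  -- basic functions
  set S : EuclideanSpace ℝ (Fin n) → ℝ := fun x => ∑ j, (x j) ^ 2 with hS
  have hScd : ContDiff ℝ 2 S := by
    rw [hS]
    exact ContDiff.sum fun i _ => ((EuclideanSpace.proj (𝕜 := ℝ) i).contDiff).pow 2
  set u : EuclideanSpace ℝ (Fin n) → ℝ := fun x => (S x + 1) / (2 * x i_n) with hu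
  set F : EuclideanSpace ℝ (Fin n) → ℝ := fun x => ∑ j, (φ x j) ^ 2 with hF
  set H : EuclideanSpace ℝ (Fin n) → ℝ := fun x => u x - 2 * F x with hH
  have hφcsm : ∀ j : Fin N, ContDiffOn ℝ 2 (fun y => φ y j) (upperHalfSpace n) :=
    fun j => (EuclideanSpace.proj (𝕜 := ℝ) j).contDiff.comp_contDiffOn (hsm.of_le (by exact WithTop.coe_le_coe.mpr (le_top : (2:ℕ∞) ≤ ⊤)))
  have hucd : ContDiffOn ℝ 2 u (upperHalfSpace n) := by
    rw [hu]
    apply ContDiffOn.div ((hScd.contDiffOn).add contDiffOn_const)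
    · exact (contDiff_const.mul (EuclideanSpace.proj (𝕜 := ℝ) i_n).contDiff).contDiffOn
    · intro x hx
      have := (hUmem x).1 hx
      positivity
  have hFcd : ContDiffOn ℝ 2 F (upperHalfSpace n) := by
    rw [hF]
    exact ContDiffOn.sum fun j _ => (hφcsm j).pow 2
  have hHcd : ContDiffOn ℝ 2 H (upperHalfSpace n) := by
    rw [hH]
    exact hucd.sub (contDiffOn_const.mul hFcd)
  -- bounds on F
  have hF0 : ∀ x, 0 ≤ F x := fun x => Finset.sum_nonneg fun j _ => sq_nonneg _
  have hFlt : ∀ x ∈ upperHalfSpace n, F x < 1 := by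
    intro x hx
    have h1 := hbd x hx
    have h2 : ‖φ x‖ ^ 2 < 1 := by nlinarith [norm_nonneg (φ x)]
    rw [euclid_norm_sq (φ x)] at h2
    exact h2
  -- the compact set K
  set K := {x : EuclideanSpace ℝ (Fin n) | S x + 1 ≤ 6 * x i_n} with hK
  have hsq_le : ∀ x : EuclideanSpace ℝ (Fin n), (x i_n) ^ 2 ≤ S x := by
    intro x
    rw [hS]
    exact Finset.single_le_sum (f := fun j => (x j) ^ 2)
      (fun i _ => by positivity) (Finset.mem_univ i_n)
  have hKU : K ⊆ upperHalfSpace n := by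
    intro x hx
    rw [hUmem]
    by_contra hle
    push_neg at hle
    have h1 := hsq_le x
    have h2 : S x + 1 ≤ 6 * x i_n := hx
    nlinarith
  have hKcl : IsClosed K := by
    have hc1 : Continuous fun x : EuclideanSpace ℝ (Fin n) => S x + 1 :=
      (hScd.continuous).add continuous_const
    have hc2 : Continuous fun x : EuclideanSpace ℝ (Fin n) => 6 * x i_n :=
      continuous_const.mul (EuclideanSpace.proj (𝕜 := ℝ) i_n).continuous
    exact isClosed_le hc1 hc2
  have hKbdd : Bornology.IsBounded K := by
    apply (Metric.isBounded_closedBall (x := (0 : EuclideanSpace ℝ (Fin n))) (r := 6)).subset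
    intro x hx
    have h1 : S x + 1 ≤ 6 * x i_n := hx
    have h2 := hsq_le x
    have hxn : 0 < x i_n := (hUmem x).1 (hKU hx)
    have hnorm : ‖x‖ ^ 2 = S x := by rw [euclid_norm_sq x, hS]
    simp only [Metric.mem_closedBall, dist_zero_right]
    have hm : x i_n ≤ ‖x‖ := by nlinarith [norm_nonneg x]
    nlinarith [hm, sq_nonneg (‖x‖ - 6)]
  have hKcpt : IsCompact K := Metric.isCompact_of_isClosed_isBounded hKcl hKbdd
  -- the center point
  set c : EuclideanSpace ℝ (Fin n) := EuclideanSpace.single i_n 1 with hc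
  have hcin : c i_n = 1 := by simp [hc, EuclideanSpace.single_apply]
  have hSc1 : S c = 1 := by
    simp only [hS]
    have h1 : ∀ j : Fin n, (c j) ^ 2 = if j = i_n then (1:ℝ) else 0 := by
      intro j
      rw [hc]
      rw [EuclideanSpace.single_apply]
      split_ifs <;> norm_num
    rw [Finset.sum_congr rfl fun j _ => h1 j, Finset.sum_ite_eq' Finset.univ i_n]
    simp
  have hcK : c ∈ K := by
    have : S c + 1 ≤ 6 * c i_n := by rw [hSc1, hcin]; norm_num
    exact this
  have hcU : c ∈ upperHalfSpace n := hKU hcK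
  -- minimum of H on K
  obtain ⟨x₀, hx₀K, hx₀min⟩ := hKcpt.exists_isMinOn ⟨c, hcK⟩ ((hHcd.continuousOn).mono hKU)
  have hx₀U : x₀ ∈ upperHalfSpace n := hKU hx₀K
  have ht : 0 < x₀ i_n := (hUmem x₀).1 hx₀U
  set t : ℝ := x₀ i_n with htdef
  have huc1 : u c = 1 := by simp only [hu]; rw [hSc1, hcin]; norm_num
  have hHc1 : H c ≤ 1 := by
    simp only [hH]; rw [huc1]
    nlinarith [hF0 c]
  have hHx₀c : H x₀ ≤ H c := isMinOn_iff.mp hx₀min c hcK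
  have hu3 : u x₀ < 3 := by
    have h1 : H x₀ = u x₀ - 2 * F x₀ := by simp only [hH]
    have h2 := hFlt x₀ hx₀U
    linarith
  -- x₀ is a local minimum of H
  have hminU : ∀ x ∈ upperHalfSpace n, H x₀ ≤ H x := by
    intro x hx
    by_cases hxK : x ∈ K
    · exact isMinOn_iff.mp hx₀min x hxK
    · have hxn : 0 < x i_n := (hUmem x).1 hx
      have hgt : 6 * x i_n < S x + 1 := by
        by_contra hcon
        push_neg at hcon
        exact hxK hcon
      have hxu : 3 < u x := by
        simp only [hu]
        rw [lt_div_iff₀ (by positivity)]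
        linarith
      have hHx : 1 < H x := by
        have h2 := hFlt x hx
        have h3 : H x = u x - 2 * F x := by simp only [hH]
        linarith
      linarith
  have hlocmin : IsLocalMin H x₀ :=
    IsMinOn.isLocalMin (fun x hx => hminU x hx) (hUopen.mem_nhds hx₀U)
  -- line maps and their basic properties
  have hlineCD : ∀ (f : EuclideanSpace ℝ (Fin n) → ℝ), ContDiffOn ℝ 2 f (upperHalfSpace n) →
      ∀ w : EuclideanSpace ℝ (Fin n), ContDiffOn ℝ 2 (fun r : ℝ => f (x₀ + r • w))
        ((fun r : ℝ => x₀ + r • w) ⁻¹' (upperHalfSpace n)) := by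
    intro f hf w
    exact hf.comp ((contDiff_const.add (contDiff_id.smul contDiff_const)).contDiffOn)
      (fun r hr => hr)
  have hlineOpen : ∀ w : EuclideanSpace ℝ (Fin n),
      IsOpen ((fun r : ℝ => x₀ + r • w) ⁻¹' (upperHalfSpace n)) :=
    fun w => hUopen.preimage (continuous_const.add (continuous_id.smul continuous_const))
  have hline0 : ∀ w : EuclideanSpace ℝ (Fin n),
      (0:ℝ) ∈ ((fun r : ℝ => x₀ + r • w) ⁻¹' (upperHalfSpace n)) := by
    intro w
    simp only [Set.mem_preimage, zero_smul, add_zero]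
    exact hx₀U
  have hlineMin : ∀ w : EuclideanSpace ℝ (Fin n),
      IsLocalMin (fun r : ℝ => H (x₀ + r • w)) 0 := by
    intro w
    have hcont : Continuous (fun r : ℝ => x₀ + r • w) :=
      continuous_const.add (continuous_id.smul continuous_const)
    have hten : Filter.Tendsto (fun r : ℝ => x₀ + r • w) (nhds 0) (nhds x₀) := by
      have h := hcont.tendsto 0
      simpa using h
    have hmf : IsMinFilter H (nhds x₀) ((fun r : ℝ => x₀ + r • w) 0) := by
      have h0 : (fun r : ℝ => x₀ + r • w) 0 = x₀ := by simp
      rw [h0]; exact hlocmin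
    have h2 := IsMinFilter.comp_tendsto (g := fun r : ℝ => x₀ + r • w) (b := (0:ℝ)) hmf hten
    exact h2
  -- second derivative of H along coordinate directions is nonnegative
  have hD2H : ∀ i : Fin n,
      0 ≤ deriv (deriv (fun r : ℝ => H (x₀ + r • EuclideanSpace.single i 1))) 0 :=
    fun i => secondDeriv_nonneg_of_isLocalMin (hlineOpen _) (hline0 _)
      (hlineCD H hHcd _) (hlineMin _)
  have hD1H : deriv (fun r : ℝ => H (x₀ + r • EuclideanSpace.single i_n 1)) 0 = 0 :=
    (hlineMin _).deriv_eq_zero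
  -- decompose H into u and F parts
  have hHdecomp2 : ∀ w : EuclideanSpace ℝ (Fin n),
      deriv (deriv (fun r : ℝ => H (x₀ + r • w))) 0
        = deriv (deriv (fun r : ℝ => u (x₀ + r • w))) 0
          - 2 * deriv (deriv (fun r : ℝ => F (x₀ + r • w))) 0 := by
    intro w
    have heq : (fun r : ℝ => H (x₀ + r • w))
        = fun r => u (x₀ + r • w) - 2 * F (x₀ + r • w) := by
      funext r; simp only [hH]
    rw [heq]
    exact comb_deriv2 (hlineOpen w) (hline0 w) (hlineCD u hucd w) (hlineCD F hFcd w)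
  have hHdecomp1 :
      deriv (fun r : ℝ => H (x₀ + r • EuclideanSpace.single i_n 1)) 0
        = deriv (fun r : ℝ => u (x₀ + r • EuclideanSpace.single i_n 1)) 0
          - 2 * deriv (fun r : ℝ => F (x₀ + r • EuclideanSpace.single i_n 1)) 0 := by
    have heq : (fun r : ℝ => H (x₀ + r • EuclideanSpace.single i_n 1))
        = fun r => u (x₀ + r • EuclideanSpace.single i_n 1)
            - 2 * F (x₀ + r • EuclideanSpace.single i_n 1) := by
      funext r; simp only [hH]
    rw [heq]
    exact comb_deriv0 (hlineOpen _) (hline0 _) (hlineCD u hucd _) (hlineCD F hFcd _)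
  -- explicit form of u along coordinate lines
  have hulineq : ∀ i : Fin n, (fun r : ℝ => u (x₀ + r • EuclideanSpace.single i 1))
      = fun r : ℝ => ((S x₀ + 1) + (2 * x₀ i) * r + r ^ 2)
          / (2 * (t + r * (if i_n = i then 1 else 0))) := by
    intro i
    funext r
    have hcoord : ∀ j : Fin n, ((x₀ + r • EuclideanSpace.single i 1 :
        EuclideanSpace ℝ (Fin n))) j = x₀ j + r * (if j = i then 1 else 0) := by
      intro j
      simp [EuclideanSpace.single_apply]
    have hSval : S (x₀ + r • EuclideanSpace.single i 1) = S x₀ + 2 * x₀ i * r + r ^ 2 := by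
      simp only [hS]
      rw [Finset.sum_congr rfl fun j _ => by rw [hcoord j]]
      have hsplit : ∀ j : Fin n, (x₀ j + r * (if j = i then 1 else 0)) ^ 2
          = (x₀ j) ^ 2 + (if j = i then 2 * x₀ i * r + r ^ 2 else 0) := by
        intro j
        split_ifs with h
        · subst h; ring
        · ring
      rw [Finset.sum_congr rfl fun j _ => hsplit j, Finset.sum_add_distrib,
        Finset.sum_ite_eq' Finset.univ i]
      simp
      ring
    simp only [hu]
    rw [hSval, hcoord i_n, ← htdef]
    ring_nf
  have hD2u : ∀ i : Fin n,
      deriv (deriv (fun r : ℝ => u (x₀ + r • EuclideanSpace.single i 1))) 0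
        = (t ^ 2 - (2 * x₀ i) * t * (if i_n = i then 1 else 0)
            + (S x₀ + 1) * (if i_n = i then 1 else 0) ^ 2) / t ^ 3 := by
    intro i
    rw [hulineq i]
    exact rat_deriv2 (S x₀ + 1) (2 * x₀ i) t _ ht
  have hD1u : deriv (fun r : ℝ => u (x₀ + r • EuclideanSpace.single i_n 1)) 0
      = (2 * t * t - (S x₀ + 1)) / (2 * t ^ 2) := by
    rw [hulineq i_n, rat_deriv0 (S x₀ + 1) (2 * x₀ i_n) t _ ht, ← htdef]
    simp
  have hsum2u :
      ∑ i : Fin n, deriv (deriv (fun r : ℝ => u (x₀ + r • EuclideanSpace.single i 1))) 0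
        = (n : ℝ) * (1 / t) + ((S x₀ + 1 - t ^ 2) / t ^ 3 - 1 / t) := by
    have h1 : ∀ i : Fin n,
        deriv (deriv (fun r : ℝ => u (x₀ + r • EuclideanSpace.single i 1))) 0
          = 1 / t + (if i_n = i then (S x₀ + 1 - t ^ 2) / t ^ 3 - 1 / t else 0) := by
      intro i
      rw [hD2u i]
      split_ifs with h
      · rw [← h, ← htdef]
        have ht' : t ≠ 0 := ne_of_gt ht
        field_simp
        ring
      · have ht' : t ≠ 0 := ne_of_gt ht
        field_simp
        ring
    rw [Finset.sum_congr rfl fun i _ => h1 i, Finset.sum_add_distrib,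
      Finset.sum_const, Finset.sum_ite_eq Finset.univ i_n]
    simp [Finset.card_univ]
  -- derivatives of F along lines
  have hψcd : ∀ (w : EuclideanSpace ℝ (Fin n)) (j : Fin N),
      ContDiffOn ℝ 2 (fun r : ℝ => φ (x₀ + r • w) j)
        ((fun r : ℝ => x₀ + r • w) ⁻¹' (upperHalfSpace n)) :=
    fun w j => hlineCD (fun y => φ y j) (hφcsm j) w
  have hFline : ∀ w : EuclideanSpace ℝ (Fin n),
      (fun r : ℝ => F (x₀ + r • w)) = fun r => ∑ j : Fin N, (φ (x₀ + r • w) j) ^ 2 := by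
    intro w; funext r; simp only [hF]
  have hD1F : ∀ w : EuclideanSpace ℝ (Fin n),
      deriv (fun r : ℝ => F (x₀ + r • w)) 0
        = ∑ j : Fin N, 2 * φ x₀ j * fderiv ℝ (fun y => φ y j) x₀ w := by
    intro w
    rw [hFline w, sumsq_deriv0 (hlineOpen w) (hline0 w) (fun j => hψcd w j)]
    apply Finset.sum_congr rfl
    intro j _
    rw [line_deriv_eq hUopen hx₀U (hφcsm j) w]
    norm_num
  have hD2F : ∀ w : EuclideanSpace ℝ (Fin n),
      deriv (deriv (fun r : ℝ => F (x₀ + r • w))) 0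
        = ∑ j : Fin N, (2 * (fderiv ℝ (fun y => φ y j) x₀ w) ^ 2
            + 2 * φ x₀ j * fderiv ℝ (fun y => fderiv ℝ (fun y' => φ y' j) y w) x₀ w) := by
    intro w
    rw [hFline w, sumsq_deriv2 (hlineOpen w) (hline0 w) (fun j => hψcd w j)]
    apply Finset.sum_congr rfl
    intro j _
    rw [line_deriv_eq hUopen hx₀U (hφcsm j) w,
      line_second_deriv_eq hUopen hx₀U (hφcsm j) w]
    norm_num
  -- the isometry condition, componentwise
  have hφdiff : DifferentiableAt ℝ φ x₀ :=
    (hsm.differentiableOn (by simp)).differentiableAt (hUopen.mem_nhds hx₀U)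
  have hcomp : ∀ j : Fin N, fderiv ℝ (fun y => φ y j) x₀
      = (EuclideanSpace.proj (𝕜 := ℝ) j).comp (fderiv ℝ φ x₀) := by
    intro j
    have h := ((EuclideanSpace.proj (𝕜 := ℝ) j).hasFDerivAt (x := φ x₀)).comp x₀
      hφdiff.hasFDerivAt
    exact h.fderiv
  have hiso_sum : ∀ w : EuclideanSpace ℝ (Fin n),
      ∑ j : Fin N, (fderiv ℝ (fun y => φ y j) x₀ w) ^ 2 = ‖w‖ ^ 2 / t ^ 2 := by
    intro w
    have h1 : ∀ j : Fin N, fderiv ℝ (fun y => φ y j) x₀ w = (fderiv ℝ φ x₀ w) j := by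
      intro j; rw [hcomp j]; rfl
    rw [Finset.sum_congr rfl fun j _ => by rw [h1 j], ← euclid_norm_sq (fderiv ℝ φ x₀ w),
      hiso x₀ hx₀U w, hheight, ← htdef]
  have hiso_single : ∀ i : Fin n,
      ∑ j : Fin N, (fderiv ℝ (fun y => φ y j) x₀ (EuclideanSpace.single i 1)) ^ 2
        = 1 / t ^ 2 := by
    intro i
    rw [hiso_sum (EuclideanSpace.single i 1), EuclideanSpace.norm_single]
    norm_num
  -- minimality, componentwise
  have hminj : ∀ j : Fin N,
      t ^ 2 * (∑ i : Fin n, fderiv ℝ (fun y => fderiv ℝ (fun y' => φ y' j) y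
          (EuclideanSpace.single i 1)) x₀ (EuclideanSpace.single i 1))
        + (2 - (n:ℝ)) * t * fderiv ℝ (fun y => φ y j) x₀ (EuclideanSpace.single i_n 1)
        = 0 := by
    intro j
    have h := hmino x₀ hx₀U j
    simp only [hypLaplacian, euclLaplacian] at h
    rw [hheight, hvert] at h
    rw [← htdef] at h
    exact h
  -- assembling the sum of second derivatives of F
  have hsum2F :
      ∑ i : Fin n, deriv (deriv (fun r : ℝ => F (x₀ + r • EuclideanSpace.single i 1))) 0
        = (n : ℝ) * (2 / t ^ 2)
          + ∑ j : Fin N, 2 * φ x₀ j * (∑ i : Fin n,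
              fderiv ℝ (fun y => fderiv ℝ (fun y' => φ y' j) y
                (EuclideanSpace.single i 1)) x₀ (EuclideanSpace.single i 1)) := by
    have h1 : ∀ i : Fin n,
        deriv (deriv (fun r : ℝ => F (x₀ + r • EuclideanSpace.single i 1))) 0
          = 2 / t ^ 2 + ∑ j : Fin N, 2 * φ x₀ j *
              fderiv ℝ (fun y => fderiv ℝ (fun y' => φ y' j) y
                (EuclideanSpace.single i 1)) x₀ (EuclideanSpace.single i 1) := by
      intro i
      rw [hD2F (EuclideanSpace.single i 1), Finset.sum_add_distrib]
      congr 1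
      · have h2 : ∀ j : Fin N,
            2 * (fderiv ℝ (fun y => φ y j) x₀ (EuclideanSpace.single i 1)) ^ 2
              = 2 * ((fderiv ℝ (fun y => φ y j) x₀ (EuclideanSpace.single i 1)) ^ 2) := by
          intro j; ring
        rw [← Finset.mul_sum, hiso_single i]
        ring
    rw [Finset.sum_congr rfl fun i _ => h1 i, Finset.sum_add_distrib, Finset.sum_const,
      Finset.card_univ, Fintype.card_fin, nsmul_eq_mul, Finset.sum_comm]
    congr 1
    apply Finset.sum_congr rfl
    intro j _
    rw [Finset.mul_sum]
  -- final计算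
  have hQH : (0:ℝ) ≤ t ^ 2 * ∑ i : Fin n,
      deriv (deriv (fun r : ℝ => H (x₀ + r • EuclideanSpace.single i 1))) 0 :=
    mul_nonneg (by positivity) (Finset.sum_nonneg fun i _ => hD2H i)
  have hD1balance :
      deriv (fun r : ℝ => u (x₀ + r • EuclideanSpace.single i_n 1)) 0
        = 2 * deriv (fun r : ℝ => F (x₀ + r • EuclideanSpace.single i_n 1)) 0 := by
    have := hHdecomp1
    rw [hD1H] at this
    linarith
  have hsplitH :
      ∑ i : Fin n, deriv (deriv (fun r : ℝ => H (x₀ + r • EuclideanSpace.single i 1))) 0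
        = (∑ i : Fin n, deriv (deriv (fun r : ℝ => u (x₀ + r • EuclideanSpace.single i 1))) 0)
          - 2 * ∑ i : Fin n,
              deriv (deriv (fun r : ℝ => F (x₀ + r • EuclideanSpace.single i 1))) 0 := by
    rw [Finset.sum_congr rfl fun i _ => hHdecomp2 (EuclideanSpace.single i 1),
      Finset.sum_sub_distrib, ← Finset.mul_sum]
  have hux₀ : u x₀ = (S x₀ + 1) / (2 * t) := by simp only [hu, htdef]
  -- Laplacian identity for u : Δ_g u = n u
  have hlapu : t ^ 2 * (∑ i : Fin n,
        deriv (deriv (fun r : ℝ => u (x₀ + r • EuclideanSpace.single i 1))) 0)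
      + (2 - (n:ℝ)) * t * deriv (fun r : ℝ => u (x₀ + r • EuclideanSpace.single i_n 1)) 0
      = (n:ℝ) * u x₀ := by
    rw [hsum2u, hD1u, hux₀]
    have ht' : t ≠ 0 := ne_of_gt ht
    field_simp
    ring
  -- Laplacian identity for F : Δ_g F = 2 n
  have hlapF : t ^ 2 * (∑ i : Fin n,
        deriv (deriv (fun r : ℝ => F (x₀ + r • EuclideanSpace.single i 1))) 0)
      + (2 - (n:ℝ)) * t * deriv (fun r : ℝ => F (x₀ + r • EuclideanSpace.single i_n 1)) 0
      = 2 * (n:ℝ) := by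
    rw [hsum2F, hD1F (EuclideanSpace.single i_n 1)]
    rw [mul_add, Finset.mul_sum, Finset.mul_sum, add_assoc, ← Finset.sum_add_distrib]
    have hz : ∀ j : Fin N,
        t ^ 2 * (2 * φ x₀ j * (∑ i : Fin n,
            fderiv ℝ (fun y => fderiv ℝ (fun y' => φ y' j) y
              (EuclideanSpace.single i 1)) x₀ (EuclideanSpace.single i 1)))
          + (2 - (n:ℝ)) * t * (2 * φ x₀ j *
              fderiv ℝ (fun y => φ y j) x₀ (EuclideanSpace.single i_n 1)) = 0 := by
      intro j
      have h := hminj j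
      linear_combination (2 * φ x₀ j) * h
    rw [Finset.sum_congr rfl fun j _ => hz j, Finset.sum_const, smul_zero]
    have ht' : t ≠ 0 := ne_of_gt ht
    field_simp
    ring
  -- conclude
  have hkey : (0:ℝ) ≤ (n:ℝ) * u x₀ - 2 * (2 * (n:ℝ)) := by
    have h1 : t ^ 2 * ∑ i : Fin n,
        deriv (deriv (fun r : ℝ => H (x₀ + r • EuclideanSpace.single i 1))) 0
          = (n:ℝ) * u x₀ - 2 * (2 * (n:ℝ)) := by
      rw [hsplitH]
      have expand : t ^ 2 * ((∑ i : Fin n,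
          deriv (deriv (fun r : ℝ => u (x₀ + r • EuclideanSpace.single i 1))) 0)
            - 2 * ∑ i : Fin n,
              deriv (deriv (fun r : ℝ => F (x₀ + r • EuclideanSpace.single i 1))) 0)
          = (t ^ 2 * (∑ i : Fin n,
              deriv (deriv (fun r : ℝ => u (x₀ + r • EuclideanSpace.single i 1))) 0)
            + (2 - (n:ℝ)) * t *
              deriv (fun r : ℝ => u (x₀ + r • EuclideanSpace.single i_n 1)) 0)
          - 2 * (t ^ 2 * (∑ i : Fin n,
              deriv (deriv (fun r : ℝ => F (x₀ + r • EuclideanSpace.single i 1))) 0)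
            + (2 - (n:ℝ)) * t *
              deriv (fun r : ℝ => F (x₀ + r • EuclideanSpace.single i_n 1)) 0) := by
        rw [hD1balance]
        ring
      rw [expand, hlapu, hlapF]
    linarith [hQH, h1.symm.le, h1.le]
  have hn2 : (2:ℝ) ≤ (n:ℝ) := by exact_mod_cast hn
  nlinarith [hkey, hu3, hn2]

end Main
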